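/- arXiv:math/0210307 — 4 statements merged into one kernel-verified Lean document; each statement's English description precedes it below -/
import Mathlib

section
/- Let G be a group, m ≥ 1, and let g ∈ G^m be an m-tuple generating G (Subgroup.closure (Set.range g) = ⊤). Then for every h ∈ G the conjugate tuple (h g_1 h^{-1}, ..., h g_m h^{-1}) is Nielsen-equivalent in G to (g_1,...,g_m). -/
/-- An elementary Nielsen move on an `m`-tuple of elements of a group `G`:
replace some `gᵢ` by `gᵢ⁻¹`, or interchange `gᵢ` and `gⱼ` for some `i ≠ j`,
or replace `gᵢ` by `gᵢ * gⱼ` for some `i ≠ j`. -/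
def NielsenMove {G : Type*} [Group G] {m : ℕ} (τ τ' : Fin m → G) : Prop :=
  (∃ i, τ' = Function.update τ i (τ i)⁻¹) ∨
  (∃ i j, i ≠ j ∧ τ' = τ ∘ Equiv.swap i j) ∨
  (∃ i j, i ≠ j ∧ τ' = Function.update τ i (τ i * τ j))

/-- Two `m`-tuples are Nielsen-equivalent in `G` if one is obtained from the
other by a finite chain of elementary Nielsen moves. -/
def NielsenEquiv {G : Type*} [Group G] {m : ℕ} (τ τ' : Fin m → G) : Prop :=
  Relation.ReflTransGen NielsenMove τ τ'

/-!
Conjugating the whole tuple by one of its entries `gⱼ` is a composite of Nielsen moves: `gⱼ` is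
fixed, and each `gᵢ` with `i ≠ j` is conjugated by `gⱼ` through six moves on the pair `(gᵢ, gⱼ)`.
Nielsen equivalence is symmetric and is preserved by automorphisms, so the elements `h` for which
`h g h⁻¹` is equivalent to `g` form a subgroup; it contains the generators, hence is all of `G`.
-/

open Function

local infix:50 " ~ₙ " => NielsenEquiv

lemma Function.update_update_of_ne_self {α β : Type*} [DecidableEq α] {i j : α} (hij : i ≠ j)
    (f : α → β) (b : β) : update (update f i b) j (f j) = update f i b :=
  update_eq_self_iff.2 (update_of_ne hij.symm b f).symm

section Moves

variable {G H : Type*} [Group G] [Group H] {m : ℕ}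

lemma NielsenMove.map (φ : G →* H) {τ τ' : Fin m → G} (hτ : NielsenMove τ τ') :
    NielsenMove (φ ∘ τ) (φ ∘ τ') := by
  rcases hτ with ⟨i, rfl⟩ | ⟨i, j, hij, rfl⟩ | ⟨i, j, hij, rfl⟩
  · exact Or.inl ⟨i, by rw [comp_update, comp_apply, map_inv]⟩
  · exact Or.inr (Or.inl ⟨i, j, hij, rfl⟩)
  · exact Or.inr (Or.inr ⟨i, j, hij, by rw [comp_update, comp_apply, map_mul]; rfl⟩)

lemma NielsenEquiv.map (φ : G →* H) {τ τ' : Fin m → G} (hτ : τ ~ₙ τ') :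
    φ ∘ τ ~ₙ φ ∘ τ' :=
  Relation.ReflTransGen.lift (φ ∘ ·) (fun _ _ ↦ NielsenMove.map φ) τ τ' hτ

lemma NielsenEquiv.trans {τ₁ τ₂ τ₃ : Fin m → G} (h₁₂ : τ₁ ~ₙ τ₂) (h₂₃ : τ₂ ~ₙ τ₃) :
    τ₁ ~ₙ τ₃ :=
  Relation.ReflTransGen.trans h₁₂ h₂₃

instance : Trans (NielsenEquiv (G := G) (m := m)) NielsenEquiv NielsenEquiv :=
  ⟨NielsenEquiv.trans⟩

variable {i j : Fin m}

lemma nielsenEquiv_update_update_inv_left (hij : i ≠ j) (σ : Fin m → G) (a b : G) :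
    update (update σ i a) j b ~ₙ update (update σ i a⁻¹) j b := by
  refine .single (Or.inl ⟨i, ?_⟩)
  rw [update_of_ne hij, update_self, update_comm hij.symm, update_idem]

lemma nielsenEquiv_update_update_inv_right (σ : Fin m → G) (a b : G) :
    update (update σ i a) j b ~ₙ update (update σ i a) j b⁻¹ :=
  .single (Or.inl ⟨j, by rw [update_self, update_idem]⟩)

lemma nielsenEquiv_update_update_mul_left (hij : i ≠ j) (σ : Fin m → G) (a b : G) :
    update (update σ i a) j b ~ₙ update (update σ i (a * b)) j b := by
  refine .single (Or.inr (Or.inr ⟨i, j, hij, ?_⟩))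
  rw [update_of_ne hij, update_self, update_self, update_comm hij.symm, update_idem]

lemma NielsenMove.reverse {τ τ' : Fin m → G} (hτ : NielsenMove τ τ') : τ' ~ₙ τ := by
  rcases hτ with ⟨i, rfl⟩ | ⟨i, j, hij, rfl⟩ | ⟨i, j, hij, rfl⟩
  · exact .single (Or.inl ⟨i, by rw [update_self, inv_inv, update_idem, update_eq_self]⟩)
  · refine .single (Or.inr (Or.inl ⟨i, j, hij, funext fun k ↦ ?_⟩))
    exact congrArg τ (Equiv.swap_apply_self i j k).symm
  · calc update τ i (τ i * τ j)
        = update (update τ i (τ i * τ j)) j (τ j) :=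
          (update_update_of_ne_self hij τ _).symm
      _ ~ₙ update (update τ i (τ i * τ j)) j (τ j)⁻¹ := nielsenEquiv_update_update_inv_right ..
      _ ~ₙ update (update τ i (τ i * τ j * (τ j)⁻¹)) j (τ j)⁻¹ :=
          nielsenEquiv_update_update_mul_left hij ..
      _ ~ₙ update (update τ i (τ i * τ j * (τ j)⁻¹)) j (τ j)⁻¹⁻¹ :=
          nielsenEquiv_update_update_inv_right ..
      _ = τ := by rw [mul_inv_cancel_right, inv_inv, update_eq_self, update_eq_self]

lemma NielsenEquiv.symm {τ τ' : Fin m → G} (hτ : τ ~ₙ τ') : τ' ~ₙ τ := by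
  induction hτ with
  | refl => exact .refl
  | tail _ hmove ih => exact hmove.reverse.trans ih

lemma NielsenEquiv.conj (a : G) {τ τ' : Fin m → G} (hτ : τ ~ₙ τ') :
    (fun i ↦ a * τ i * a⁻¹) ~ₙ (fun i ↦ a * τ' i * a⁻¹) :=
  hτ.map (MulAut.conj a).toMonoidHom

lemma nielsenEquiv_update_conj (hij : i ≠ j) (τ : Fin m → G) :
    τ ~ₙ update τ i (τ j * τ i * (τ j)⁻¹) :=
  calc τ = update (update τ i (τ i)) j (τ j) := by rw [update_eq_self, update_eq_self]
    _ ~ₙ update (update τ i (τ i)) j (τ j)⁻¹ := nielsenEquiv_update_update_inv_right ..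
    _ ~ₙ update (update τ i (τ i)⁻¹) j (τ j)⁻¹ := nielsenEquiv_update_update_inv_left hij ..
    _ ~ₙ update (update τ i ((τ i)⁻¹ * (τ j)⁻¹)) j (τ j)⁻¹ :=
        nielsenEquiv_update_update_mul_left hij ..
    _ ~ₙ update (update τ i ((τ i)⁻¹ * (τ j)⁻¹)⁻¹) j (τ j)⁻¹ :=
        nielsenEquiv_update_update_inv_left hij ..
    _ ~ₙ update (update τ i (((τ i)⁻¹ * (τ j)⁻¹)⁻¹ * (τ j)⁻¹)) j (τ j)⁻¹ :=
        nielsenEquiv_update_update_mul_left hij ..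
    _ ~ₙ update (update τ i (((τ i)⁻¹ * (τ j)⁻¹)⁻¹ * (τ j)⁻¹)) j (τ j)⁻¹⁻¹ :=
        nielsenEquiv_update_update_inv_right ..
    _ = update τ i (τ j * τ i * (τ j)⁻¹) := by
        rw [mul_inv_rev, inv_inv, inv_inv, update_update_of_ne_self hij]

lemma nielsenEquiv_piecewise_conj (τ : Fin m → G) (j : Fin m) {s : Finset (Fin m)}
    (hj : j ∉ s) : τ ~ₙ s.piecewise (fun i ↦ τ j * τ i * (τ j)⁻¹) τ := by
  induction s using Finset.induction_on with
  | empty => rw [Finset.piecewise_empty]; exact .refl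
  | insert i s hi ih =>
    rw [Finset.mem_insert, not_or] at hj
    set σ := s.piecewise (fun i ↦ τ j * τ i * (τ j)⁻¹) τ
    have hσi : σ i = τ i := Finset.piecewise_eq_of_notMem _ _ _ hi
    have hσj : σ j = τ j := Finset.piecewise_eq_of_notMem _ _ _ hj.2
    calc τ ~ₙ σ := ih hj.2
      _ ~ₙ update σ i (σ j * σ i * (σ j)⁻¹) := nielsenEquiv_update_conj (Ne.symm hj.1) σ
      _ = _ := by rw [Finset.piecewise_insert, hσi, hσj]

lemma nielsenEquiv_conj_apply (τ : Fin m → G) (j : Fin m) :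
    τ ~ₙ fun i ↦ τ j * τ i * (τ j)⁻¹ := by
  set σ := (Finset.univ.erase j).piecewise (fun i ↦ τ j * τ i * (τ j)⁻¹) τ
  have hσj : σ j = τ j := Finset.piecewise_eq_of_notMem _ _ _ (Finset.notMem_erase j _)
  calc τ ~ₙ σ := nielsenEquiv_piecewise_conj τ j (Finset.notMem_erase j _)
    _ = update σ j (τ j * τ j * (τ j)⁻¹) := by rw [mul_inv_cancel_right, ← hσj, update_eq_self]
    _ = fun i ↦ τ j * τ i * (τ j)⁻¹ := by
        rw [← Finset.piecewise_insert, Finset.insert_erase (Finset.mem_univ j),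
          Finset.piecewise_univ]

end Moves

theorem conj_tuple_nielsenEquiv_general {G : Type*} [Group G] {m : ℕ}
    (g : Fin m → G) (hg : Subgroup.closure (Set.range g) = ⊤) (h : G) :
    NielsenEquiv (fun i => h * g i * h⁻¹) g := by
  have hmem : h ∈ Subgroup.closure (Set.range g) := hg ▸ Subgroup.mem_top h
  induction hmem using Subgroup.closure_induction with
  | mem x hx =>
    obtain ⟨j, rfl⟩ := hx
    exact (nielsenEquiv_conj_apply g j).symm
  | one =>
    simp only [one_mul, inv_one, mul_one]
    exact .refl
  | mul a b _ _ ha hb =>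
    calc (fun i ↦ a * b * g i * (a * b)⁻¹) = fun i ↦ a * (b * g i * b⁻¹) * a⁻¹ := by
          simp only [mul_inv_rev, mul_assoc]
      _ ~ₙ fun i ↦ a * g i * a⁻¹ := hb.conj a
      _ ~ₙ g := ha
  | inv a _ ha =>
    calc (fun i ↦ a⁻¹ * g i * a⁻¹⁻¹) ~ₙ fun i ↦ a⁻¹ * (a * g i * a⁻¹) * a⁻¹⁻¹ :=
          (ha.conj a⁻¹).symm
      _ = g := funext fun i ↦ by group

/-- For a generating `m`-tuple `g` of `G`, any conjugate tuple is
Nielsen-equivalent to `g` in `G`. -/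
theorem conj_tuple_nielsenEquiv {G : Type*} [Group G] {m : ℕ} (hm : 1 ≤ m)
    (g : Fin m → G) (hg : Subgroup.closure (Set.range g) = ⊤) (h : G) :
    NielsenEquiv (fun i => h * g i * h⁻¹) g :=
  conj_tuple_nielsenEquiv_general g hg h
end

section
/- Let m > 1, F = FreeGroup (Fin m) with free basis x_i = FreeGroup.of i, and let r, s ∈ F. Let G = F/⟪r⟫ with quotient homomorphism π : F → G, and suppose every m-tuple of elements of G that generates G is Nielsen-equivalent in G to the tuple (π(x_1),...,π(x_m)). If F/⟪s⟫ is isomorphic to G, then there exists an automorphism α of F such that the normal closure of {α(s)} in F equals the normal closure of {r} in F. -/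
/-- Build an automorphism of the free group from maps on generators that are
mutually inverse after lifting. -/
def nielsenLiftAut {m : ℕ} (u v : Fin m → FreeGroup (Fin m))
    (huv : ∀ k, FreeGroup.lift u (v k) = FreeGroup.of k)
    (hvu : ∀ k, FreeGroup.lift v (u k) = FreeGroup.of k) : MulAut (FreeGroup (Fin m)) :=
  MonoidHom.toMulEquiv (FreeGroup.lift u) (FreeGroup.lift v)
    (FreeGroup.ext_hom _ _ (by simp [hvu]))
    (FreeGroup.ext_hom _ _ (by simp [huv]))

@[simp] lemma nielsenLiftAut_apply {m : ℕ} (u v : Fin m → FreeGroup (Fin m))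
    (huv : ∀ k, FreeGroup.lift u (v k) = FreeGroup.of k)
    (hvu : ∀ k, FreeGroup.lift v (u k) = FreeGroup.of k) (x : FreeGroup (Fin m)) :
    nielsenLiftAut u v huv hvu x = FreeGroup.lift u x := rfl

/-- A single Nielsen move in the image of a hom from the free group can be realized by
composing with an automorphism of the free group. -/
lemma nielsen_move_lift {m : ℕ} {G : Type*} [Group G] {σ τ : Fin m → G}
    (h : NielsenMove σ τ) (g : FreeGroup (Fin m) →* G)
    (hg : ∀ i, g (FreeGroup.of i) = σ i) :
    ∃ μ : MulAut (FreeGroup (Fin m)), ∀ i, g (μ (FreeGroup.of i)) = τ i := by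
  rcases h with ⟨i, rfl⟩ | ⟨i, j, hij, rfl⟩ | ⟨i, j, hij, rfl⟩
  · refine ⟨nielsenLiftAut (Function.update FreeGroup.of i (FreeGroup.of i)⁻¹)
      (Function.update FreeGroup.of i (FreeGroup.of i)⁻¹) ?_ ?_, ?_⟩ <;>
    · intro k
      rcases eq_or_ne k i with rfl | hk <;>
        simp [Function.update_apply, *, hg]
  · refine ⟨FreeGroup.freeGroupCongr (Equiv.swap i j), ?_⟩
    intro k
    simp [hg]
  · refine ⟨nielsenLiftAut (Function.update FreeGroup.of i (FreeGroup.of i * FreeGroup.of j))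
      (Function.update FreeGroup.of i (FreeGroup.of i * (FreeGroup.of j)⁻¹)) ?_ ?_, ?_⟩ <;>
    · intro k
      rcases eq_or_ne k i with rfl | hk <;>
        simp [Function.update_apply, Ne.symm hij, *, hg, mul_assoc]

/-- A chain of Nielsen moves in the image of a hom from the free group can be realized by
composing with an automorphism of the free group. -/
lemma nielsen_equiv_lift {m : ℕ} {G : Type*} [Group G] {σ τ : Fin m → G}
    (h : NielsenEquiv σ τ) (g : FreeGroup (Fin m) →* G)
    (hg : ∀ i, g (FreeGroup.of i) = σ i) :
    ∃ ν : MulAut (FreeGroup (Fin m)), ∀ i, g (ν (FreeGroup.of i)) = τ i := by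
  induction h with
  | refl => exact ⟨1, hg⟩
  | tail _ hstep ih =>
    obtain ⟨ν, hν⟩ := ih
    obtain ⟨μ, hμ⟩ := nielsen_move_lift hstep (g.comp ν.toMonoidHom) hν
    exact ⟨ν * μ, hμ⟩

/-- If `G = F/⟪r⟫` has the Nielsen uniqueness property and `F/⟪s⟫ ≅ G`, then
some automorphism `α` of `F` makes the normal closures of `{α s}` and `{r}` equal. -/
theorem exists_aut_normalClosure_eq_of_iso {m : ℕ} (hm : 1 < m)
    (r s : FreeGroup (Fin m))
    (hNU : ∀ τ : Fin m → PresentedGroup ({r} : Set (FreeGroup (Fin m))),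
      Subgroup.closure (Set.range τ) = ⊤ →
      NielsenEquiv τ (fun i => PresentedGroup.of i))
    (hiso : Nonempty (PresentedGroup ({s} : Set (FreeGroup (Fin m))) ≃*
      PresentedGroup ({r} : Set (FreeGroup (Fin m))))) :
    ∃ α : MulAut (FreeGroup (Fin m)),
      Subgroup.normalClosure ({α s} : Set (FreeGroup (Fin m))) =
        Subgroup.normalClosure ({r} : Set (FreeGroup (Fin m))) := by
  obtain ⟨φ⟩ := hiso
  set f : FreeGroup (Fin m) →* PresentedGroup ({r} : Set (FreeGroup (Fin m))) :=
    φ.toMonoidHom.comp (PresentedGroup.mk {s}) with hf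
  set τ : Fin m → PresentedGroup ({r} : Set (FreeGroup (Fin m))) :=
    fun i => f (FreeGroup.of i) with hτ
  have hgen : Subgroup.closure (Set.range τ) = ⊤ := by
    have h1 : Set.range τ = f '' Set.range FreeGroup.of := by
      rw [← Set.range_comp]; rfl
    rw [h1, ← MonoidHom.map_closure, FreeGroup.closure_range_of, ← MonoidHom.range_eq_map,
      MonoidHom.range_eq_top]
    exact φ.surjective.comp (PresentedGroup.mk_surjective _)
  obtain ⟨ν, hν⟩ := nielsen_equiv_lift (hNU τ hgen) f (fun i => rfl)
  have hcomp : f.comp ν.toMonoidHom = PresentedGroup.mk {r} :=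
    FreeGroup.ext_hom _ _ (fun i => hν i)
  have hker_r : (PresentedGroup.mk ({r} : Set (FreeGroup (Fin m)))).ker =
      Subgroup.normalClosure {r} := QuotientGroup.ker_mk' _
  have hker_s : (PresentedGroup.mk ({s} : Set (FreeGroup (Fin m)))).ker =
      Subgroup.normalClosure {s} := QuotientGroup.ker_mk' _
  have hkf : f.ker = Subgroup.normalClosure {s} := by
    rw [← hker_s]
    ext x
    simp [hf, MonoidHom.mem_ker, map_eq_one_iff _ φ.injective]
  have hcomap : Subgroup.comap ν.toMonoidHom (Subgroup.normalClosure {s}) =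
      Subgroup.normalClosure {r} := by
    rw [← hkf, MonoidHom.comap_ker, hcomp, hker_r]
  refine ⟨ν⁻¹, ?_⟩
  have hmap : Subgroup.map (ν.symm : FreeGroup (Fin m) →* FreeGroup (Fin m))
      (Subgroup.normalClosure {s}) = Subgroup.normalClosure {r} := by
    rw [← Subgroup.comap_equiv_eq_map_symm]; exact hcomap
  rw [← hmap, Subgroup.map_normalClosure _ _ ν.symm.surjective, Set.image_singleton]
  rfl
end

section
/- Let G be a group, m ≥ 1, and let a ∈ G^m be an m-tuple generating G. Suppose that G itself is not a free group, and that every m-tuple τ ∈ G^m for which the subgroup Subgroup.closure (Set.range τ) is not a free group is Nielsen-equivalent in G to a. Then G is co-Hopfian: every injective group homomorphism φ : G → G is surjective. -/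
private lemma closure_le_aux {G : Type*} [Group G] {m : ℕ} {τ τ' : Fin m → G}
    (h : ∀ k, τ' k ∈ Subgroup.closure (Set.range τ)) :
    Subgroup.closure (Set.range τ') ≤ Subgroup.closure (Set.range τ) := by
  rw [Subgroup.closure_le]
  rintro _ ⟨k, rfl⟩
  exact h k

private lemma nielsenMove_closure {G : Type*} [Group G] {m : ℕ} {τ τ' : Fin m → G}
    (h : NielsenMove τ τ') :
    Subgroup.closure (Set.range τ') = Subgroup.closure (Set.range τ) := by
  rcases h with ⟨i, rfl⟩ | ⟨i, j, hij, rfl⟩ | ⟨i, j, hij, rfl⟩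
  · apply le_antisymm <;> apply closure_le_aux <;> intro k
    · rcases eq_or_ne k i with rfl | hk
      · rw [Function.update_self]
        exact inv_mem (Subgroup.subset_closure ⟨k, rfl⟩)
      · rw [Function.update_of_ne hk]
        exact Subgroup.subset_closure ⟨k, rfl⟩
    · rcases eq_or_ne k i with rfl | hk
      · have h1 : Function.update τ k (τ k)⁻¹ k ∈
            Subgroup.closure (Set.range (Function.update τ k (τ k)⁻¹)) :=
          Subgroup.subset_closure ⟨k, rfl⟩
        have h2 := inv_mem h1
        rwa [Function.update_self, inv_inv] at h2
      · have h1 : Function.update τ i (τ i)⁻¹ k ∈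
            Subgroup.closure (Set.range (Function.update τ i (τ i)⁻¹)) :=
          Subgroup.subset_closure ⟨k, rfl⟩
        rwa [Function.update_of_ne hk] at h1
  · rw [Set.range_comp, Equiv.range_eq_univ, Set.image_univ]
  · apply le_antisymm <;> apply closure_le_aux <;> intro k
    · rcases eq_or_ne k i with rfl | hk
      · rw [Function.update_self]
        exact mul_mem (Subgroup.subset_closure ⟨k, rfl⟩) (Subgroup.subset_closure ⟨j, rfl⟩)
      · rw [Function.update_of_ne hk]
        exact Subgroup.subset_closure ⟨k, rfl⟩
    · rcases eq_or_ne k i with rfl | hk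
      · have h1 : Function.update τ k (τ k * τ j) k ∈
            Subgroup.closure (Set.range (Function.update τ k (τ k * τ j))) :=
          Subgroup.subset_closure ⟨k, rfl⟩
        have h2 : Function.update τ k (τ k * τ j) j ∈
            Subgroup.closure (Set.range (Function.update τ k (τ k * τ j))) :=
          Subgroup.subset_closure ⟨j, rfl⟩
        have h3 := mul_mem h1 (inv_mem h2)
        rwa [Function.update_self, Function.update_of_ne (Ne.symm hij),
          mul_inv_cancel_right] at h3
      · have h1 : Function.update τ i (τ i * τ j) k ∈
            Subgroup.closure (Set.range (Function.update τ i (τ i * τ j))) :=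
          Subgroup.subset_closure ⟨k, rfl⟩
        rwa [Function.update_of_ne hk] at h1

private lemma nielsenEquiv_closure {G : Type*} [Group G] {m : ℕ} {τ τ' : Fin m → G}
    (h : NielsenEquiv τ τ') :
    Subgroup.closure (Set.range τ') = Subgroup.closure (Set.range τ) := by
  induction h with
  | refl => rfl
  | tail _ hmv ih => rw [nielsenMove_closure hmv, ih]

/-- If `G` is not free, is generated by the `m`-tuple `a`, and every `m`-tuple
generating a non-free subgroup is Nielsen-equivalent to `a`, then `G` is
co-Hopfian: injective endomorphisms of `G` are surjective. -/
theorem coHopfian_of_nielsen_unique {G : Type*} [Group G] {m : ℕ} (hm : 1 ≤ m)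
    (a : Fin m → G) (ha : Subgroup.closure (Set.range a) = ⊤)
    (hG : ¬ IsFreeGroup G)
    (hN : ∀ τ : Fin m → G,
      ¬ IsFreeGroup ↥(Subgroup.closure (Set.range τ)) → NielsenEquiv τ a)
    (φ : G →* G) (hφ : Function.Injective φ) :
    Function.Surjective φ := by
  set τ : Fin m → G := φ ∘ a with hτ
  have hclo : Subgroup.closure (Set.range τ) = φ.range := by
    rw [hτ, Set.range_comp, ← MonoidHom.map_closure, ha, ← MonoidHom.range_eq_map]
  have hfree : ¬ IsFreeGroup ↥(Subgroup.closure (Set.range τ)) := by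
    rw [hclo]
    intro hf
    exact hG (IsFreeGroup.ofMulEquiv (MonoidHom.ofInjective hφ).symm)
  have := nielsenEquiv_closure (hN τ hfree)
  have htop : φ.range = ⊤ := by rw [← hclo, ← this, ha]
  exact MonoidHom.range_eq_top.mp htop
end

section
/- Let m ≥ 1, let F = FreeGroup β be a free group on a type β, and let w : Fin m → F be an m-tuple of elements of F. Then either the induced homomorphism FreeGroup.lift w : FreeGroup (Fin m) → F is injective (so that w_1, ..., w_m freely generate a free subgroup of rank m), or the subgroup Subgroup.closure (Set.range w) of F can be generated by at most m − 1 elements, i.e. there exists a tuple v : Fin (m-1) → F with Subgroup.closure (Set.range v) = Subgroup.closure (Set.range w). -/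
/-!
By Nielsen–Schreier the subgroup `H` generated by `w` is free, on a basis `S`. Abelianizing
the surjection `F(Fin m) → H ≅ F(S)` gives a surjection `ℤ^m → ℤ^S`, so `|S| ≤ m`. If
`|S| < m`, the images of `S` generate `H` with fewer than `m` elements. If `|S| = m`, the
surjection becomes a surjective endomorphism of `F(Fin m)`, hence injective: finitely generated
residually finite groups are Hopfian (Mal'cev), and free groups are residually finite, since a
reduced word of length `k` is detected by permutations of `{0, …, k}` that walk along it.
-/

open Cardinal

theorem Equiv.Perm.exists_extends_rel {X : Type*} [Finite X] (r : X → X → Prop)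
    (hfun : ∀ a c c', r a c → r a c' → c = c')
    (hinj : ∀ a a' c, r a c → r a' c → a = a') :
    ∃ σ : Equiv.Perm X, ∀ a c, r a c → σ a = c := by
  classical
  let e : {a // ∃ c, r a c} ≃ {c // ∃ a, r a c} :=
    { toFun := fun a => ⟨a.2.choose, a, a.2.choose_spec⟩
      invFun := fun c => ⟨c.2.choose, _, c.2.choose_spec⟩
      left_inv := fun a =>
        Subtype.ext (hinj _ _ _ (Exists.choose_spec (p := (r · _)) _) a.2.choose_spec)
      right_inv := fun c =>
        Subtype.ext (hfun _ _ _ (Exists.choose_spec (p := (r _ ·)) _) c.2.choose_spec) }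
  refine ⟨e.extendSubtype, fun a c hac => ?_⟩
  rw [e.extendSubtype_apply_of_mem a ⟨c, hac⟩]
  exact hfun _ _ _ (Exists.choose_spec (p := (r a ·)) _) hac

theorem List.prod_map_apply_last_eq {ι X : Type*} (s : ι → Equiv.Perm X) :
    ∀ (L : List ι) (x : Fin (L.length + 1) → X),
      (∀ t : Fin L.length, s L[t] (x t.succ) = x t.castSucc) →
      (L.map s).prod (x (Fin.last _)) = x 0
  | [], _, _ => rfl
  | a :: L, x, h => by
    rw [List.map_cons, List.prod_cons, Equiv.Perm.mul_apply]
    exact (congrArg (s a)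
      (List.prod_map_apply_last_eq s L (x ∘ Fin.succ) fun t => h t.succ)).trans (h 0)

namespace FreeGroup

variable {α : Type*}

/-- Read `L` as a path `0 — 1 — ⋯ — L.length` whose `t`-th edge carries the letter `L[t]`, and
let `σ i` follow the edges labelled `i`. As `L` is reduced, no two such edges share their source or
their target, so these partial maps extend to permutations. -/
theorem IsReduced.exists_perm_walk {L : List (α × Bool)} (hL : IsReduced L) :
    ∃ σ : α → Equiv.Perm (Fin (L.length + 1)), ∀ t : Fin L.length,
      cond L[t].2 (σ L[t].1) (σ L[t].1)⁻¹ t.succ = t.castSucc := by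
  let edge (i : α) (a c : Fin (L.length + 1)) : Prop := ∃ t : Fin L.length, L[t].1 = i ∧
    (L[t].2 ∧ a = t.succ ∧ c = t.castSucc ∨ L[t].2 = false ∧ a = t.castSucc ∧ c = t.succ)
  have adj (t t' : Fin L.length) (h : L[t].1 = L[t'].1) (hadj : t'.val = t + 1) :
      L[t].2 = L[t'].2 := by
    obtain ⟨t', ht'⟩ := t'
    obtain rfl : t' = t + 1 := hadj
    exact List.IsChain.getElem hL t ht' h
  have hfun (i) : ∀ a c c', edge i a c → edge i a c' → c = c' := by
    rintro a c c' ⟨t, rfl, h⟩ ⟨t', hi, h'⟩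
    have := adj t t' hi.symm
    have := adj t' t hi
    grind
  have hinj (i) : ∀ a a' c, edge i a c → edge i a' c → a = a' := by
    rintro a a' c ⟨t, rfl, h⟩ ⟨t', hi, h'⟩
    have := adj t t' hi.symm
    have := adj t' t hi
    grind
  choose σ hσ using fun i => Equiv.Perm.exists_extends_rel (edge i) (hfun i) (hinj i)
  refine ⟨σ, fun t => ?_⟩
  cases hb : L[t].2
  · rw [cond_false, Equiv.Perm.inv_eq_iff_eq]
    exact (hσ _ _ _ ⟨t, rfl, .inr ⟨hb, rfl, rfl⟩⟩).symm
  · exact hσ _ _ _ ⟨t, rfl, .inl ⟨hb, rfl, rfl⟩⟩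

theorem exists_perm_ne_one {g : FreeGroup α} (hg : g ≠ 1) :
    ∃ (n : ℕ) (f : FreeGroup α →* Equiv.Perm (Fin n)), f g ≠ 1 := by
  classical
  obtain ⟨σ, hσ⟩ := (isReduced_toWord (x := g)).exists_perm_walk
  refine ⟨_, lift σ, fun h => hg ?_⟩
  have hwalk :=
    List.prod_map_apply_last_eq (fun x => cond x.2 (σ x.1) (σ x.1)⁻¹) g.toWord (fun t => t) hσ
  rw [← lift_mk, mk_toWord, h, Equiv.Perm.one_apply, Fin.last_eq_zero_iff] at hwalk
  exact toWord_eq_nil_iff.mp (List.eq_nil_of_length_eq_zero hwalk)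

instance : Group.ResiduallyFinite (FreeGroup α) :=
  Group.residuallyFinite_of_forall_exists_finite_monoidHom fun _ hg =>
    let ⟨_, f, hf⟩ := exists_perm_ne_one hg
    ⟨_, _, inferInstance, f, hf⟩

end FreeGroup

instance MonoidHom.finite_of_fg {G Q : Type*} [Group G] [Group.FG G] [Group Q] [Finite Q] :
    Finite (G →* Q) := by
  obtain ⟨α, _, φ, hφ⟩ :=
    Group.fg_iff_exists_freeGroup_hom_surjective_finite.mp ‹Group.FG G›
  have : Finite (FreeGroup α →* Q) := .of_equiv _ FreeGroup.lift
  exact .of_injective (fun f => f.comp φ) fun _ _ => (MonoidHom.cancel_right hφ).mp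

/-- Precomposition with `φ` is injective on the finite set of homomorphisms to a finite quotient,
hence bijective; so every such homomorphism kills `ker φ`. -/
theorem MonoidHom.injective_of_surjective_of_residuallyFinite {G : Type*} [Group G] [Group.FG G]
    [Group.ResiduallyFinite G] (φ : G →* G) (hφ : Function.Surjective φ) :
    Function.Injective φ := by
  refine (injective_iff_map_eq_one φ).mpr fun g hg => by_contra fun hne => ?_
  obtain ⟨N, hN⟩ := Group.exists_finiteIndexNormalSubgroup_notMem g hne
  have hcomp : Function.Injective fun f : G →* G ⧸ N.toSubgroup => f.comp φ :=
    fun _ _ => (MonoidHom.cancel_right hφ).mp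
  obtain ⟨ψ, hψ⟩ := Finite.injective_iff_surjective.mp hcomp (QuotientGroup.mk' N.toSubgroup)
  apply hN
  rw [← N.mem_toSubgroup_iff, ← QuotientGroup.eq_one_iff, ← QuotientGroup.mk'_apply, ← hψ]
  simp [hg]

theorem FreeGroup.lift_mk_le_of_surjective {ι : Type u} {S : Type v}
    (f : FreeGroup ι →* FreeGroup S) (hf : Function.Surjective f) :
    Cardinal.lift.{u} #S ≤ Cardinal.lift.{v} #ι := by
  let fab : FreeAbelianGroup ι →ₗ[ℤ] FreeAbelianGroup S :=
    (MonoidHom.toAdditive (Abelianization.map f)).toIntLinearMap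
  have hfab : Function.Surjective fab := by
    intro y
    obtain ⟨h, rfl⟩ := QuotientGroup.mk_surjective (Additive.toMul y)
    obtain ⟨g, rfl⟩ := hf h
    exact ⟨Additive.ofMul (Abelianization.of g), rfl⟩
  simpa only [← (FreeAbelianGroup.basis ι).mk_eq_rank'',
    ← (FreeAbelianGroup.basis S).mk_eq_rank''] using fab.lift_rank_le_of_surjective hfab

theorem Subgroup.exists_fin_closure_range_eq {G S : Type*} [Group G] [Finite S] (u : S → G)
    {k : ℕ} (hk : Nat.card S ≤ k) :
    ∃ v : Fin k → G, Subgroup.closure (Set.range v) = Subgroup.closure (Set.range u) := by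
  have := Fintype.ofFinite S
  obtain ⟨emb⟩ : Nonempty (S ↪ Fin k) :=
    Function.Embedding.nonempty_of_card_le <| by
      rwa [Fintype.card_fin, ← Nat.card_eq_fintype_card]
  refine ⟨Function.extend emb u 1, le_antisymm ((closure_le _).mpr ?_) (closure_mono ?_)⟩
  · rintro _ ⟨j, rfl⟩
    by_cases hj : ∃ s, emb s = j
    · obtain ⟨s, rfl⟩ := hj
      exact subset_closure ⟨s, (emb.injective.extend_apply u 1 s).symm⟩
    · rw [Function.extend_apply' _ _ _ hj]
      exact one_mem _
  · rintro _ ⟨s, rfl⟩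
    exact ⟨emb s, emb.injective.extend_apply u 1 s⟩

theorem Subgroup.closure_range_symm_of {G S : Type*} [Group G] (H : Subgroup G)
    (e : H ≃* FreeGroup S) :
    Subgroup.closure (Set.range fun s => (e.symm (FreeGroup.of s) : G)) = H := by
  change Subgroup.closure (Set.range ((H.subtype.comp e.symm.toMonoidHom) ∘ FreeGroup.of)) = H
  rw [Set.range_comp, ← MonoidHom.map_closure, FreeGroup.closure_range_of,
    ← MonoidHom.range_eq_map, MonoidHom.range_comp, MonoidHom.range_eq_top.mpr e.symm.surjective,
    ← MonoidHom.range_eq_map, Subgroup.range_subtype]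

theorem lift_injective_or_rank_lt_general {β : Type*} {m : ℕ}
    (w : Fin m → FreeGroup β) :
    Function.Injective (FreeGroup.lift w) ∨
      ∃ v : Fin (m - 1) → FreeGroup β,
        Subgroup.closure (Set.range v) = Subgroup.closure (Set.range w) := by
  rw [← FreeGroup.range_lift_eq_closure, ← (FreeGroup.lift w).rangeRestrict_injective_iff]
  set H := (FreeGroup.lift w).range
  set π : FreeGroup (Fin m) →* H := (FreeGroup.lift w).rangeRestrict
  have hπ : Function.Surjective π := (FreeGroup.lift w).rangeRestrict_surjective
  let e : H ≃* FreeGroup (IsFreeGroup.Generators H) := IsFreeGroup.toFreeGroup H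
  have hS : #(IsFreeGroup.Generators H) ≤ m := by
    simpa using FreeGroup.lift_mk_le_of_surjective (e.toMonoidHom.comp π)
      (e.surjective.comp hπ)
  have : Finite (IsFreeGroup.Generators H) :=
    Cardinal.lt_aleph0_iff_finite.mp (hS.trans_lt Cardinal.natCast_lt_aleph0)
  rcases (Nat.cast_le.mp (Nat.cast_card.trans_le hS)).lt_or_eq with hlt | heq
  · right
    obtain ⟨v, hv⟩ := Subgroup.exists_fin_closure_range_eq
      (fun s => (e.symm (FreeGroup.of s) : FreeGroup β)) (Nat.le_sub_one_of_lt hlt)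
    exact ⟨v, hv.trans (H.closure_range_symm_of e)⟩
  · left
    let e' : H ≃* FreeGroup (Fin m) :=
      e.trans (FreeGroup.freeGroupCongr (Finite.equivFinOfCardEq heq))
    exact Function.Injective.of_comp (f := e') <|
      (e'.toMonoidHom.comp π).injective_of_surjective_of_residuallyFinite
        (e'.surjective.comp hπ)

/-- For an `m`-tuple `w` of elements of a free group `F`, either `w` freely
generates (the induced map from the rank-`m` free group is injective), or the
subgroup generated by `w` can be generated by at most `m - 1` elements. -/
theorem lift_injective_or_rank_lt {β : Type*} {m : ℕ} (hm : 1 ≤ m)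
    (w : Fin m → FreeGroup β) :
    Function.Injective (FreeGroup.lift w) ∨
      ∃ v : Fin (m - 1) → FreeGroup β,
        Subgroup.closure (Set.range v) = Subgroup.closure (Set.range w) :=
  lift_injective_or_rank_lt_general w
end
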